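/- Let (A(t))_{0≤t≤T} with A(t) = ∫₀^t (B(u)+C(u)) du, where B is a nonnegative adapted continuous process with E[∫₀^T B(u) du] < ∞ and C is a uniformly bounded adapted continuous process, on a probability space with a left-continuous filtration (F(t)). Fix t₀ ∈ (0,T] such that lim_{t↑t₀} E[A(t₀)−A(t)]/(t₀−t) = E[B(t₀)+C(t₀)]. Then the conditional expectations also converge: lim_{t↑t₀} E[A(t₀)−A(t) | F(t)]/(t₀−t) = B(t₀) + C(t₀), with the limit taken in L¹(ℙ). -/

import Mathlib

open MeasureTheory Filter
open scoped Topology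

/-!
Put `X t = (A t₀ - A t) / (t₀ - t)` and `Y = B t₀ + C t₀`. Pathwise `X t → Y` by the fundamental
theorem of calculus, `X t ≥ -K`, and `E[X t] → E[Y]`; Scheffé's argument (dominated convergence
for the negative parts `(X t - Y)⁻`) upgrades this to convergence in `L¹`. Conditional expectation
is an `L¹` contraction, so `‖E[X t | ℱ t] - Y‖₁ ≤ ‖X t - Y‖₁ + ‖E[Y | ℱ t] - Y‖₁`, and the last
term tends to `0` by Lévy's upward theorem, which applies because the filtration is
left-continuous at `t₀`.
-/

theorem tendsto_intervalIntegral_div_sub_nhdsLT {f : ℝ → ℝ} (hf : Continuous f) (b : ℝ) :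
    Tendsto (fun a => (∫ u in a..b, f u) / (b - a)) (𝓝[<] b) (𝓝 (f b)) := by
  have hslope := hasDerivAt_iff_tendsto_slope.1 (hf.integral_hasStrictDerivAt 0 b).hasDerivAt
  refine (hslope.mono_left (nhdsLT_le_nhdsNE b)).congr fun a => ?_
  rw [slope_comm, slope_def_field, intervalIntegral.integral_interval_sub_left
    (hf.intervalIntegrable 0 b) (hf.intervalIntegrable 0 a)]

theorem le_intervalIntegral_div_sub {f : ℝ → ℝ} {c s t : ℝ} (hf : IntervalIntegrable f volume s t)
    (hst : s < t) (hc : ∀ u ∈ Set.Icc s t, c ≤ f u) :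
    c ≤ (∫ u in s..t, f u) / (t - s) := by
  have h := intervalIntegral.integral_mono_on hst.le intervalIntegrable_const hf hc
  rw [intervalIntegral.integral_const, smul_eq_mul] at h
  rwa [le_div_iff₀ (sub_pos.2 hst), mul_comm]

theorem abs_intervalIntegral_add_le {b c : ℝ → ℝ} {K s t T : ℝ} (hb : Continuous b)
    (hc : Continuous c) (hb0 : ∀ u, 0 ≤ b u) (hcK : ∀ u, |c u| ≤ K) (hs : 0 ≤ s) (hst : s ≤ t)
    (htT : t ≤ T) :
    |∫ u in s..t, (b u + c u)| ≤ (∫ u in (0:ℝ)..T, b u) + K * T := by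
  rw [intervalIntegral.integral_add (hb.intervalIntegrable s t) (hc.intervalIntegrable s t)]
  have hB : |∫ u in s..t, b u| ≤ ∫ u in (0:ℝ)..T, b u := by
    rw [abs_of_nonneg (intervalIntegral.integral_nonneg hst fun u _ => hb0 u)]
    exact intervalIntegral.integral_mono_interval hs hst htT (ae_of_all _ hb0)
      (hb.intervalIntegrable 0 T)
  have hC : |∫ u in s..t, c u| ≤ K * |t - s| :=
    intervalIntegral.norm_integral_le_of_norm_le_const fun u _ =>
      (Real.norm_eq_abs _).trans_le (hcK u)
  have hK : K * |t - s| ≤ K * T := by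
    rw [abs_of_nonneg (sub_nonneg.2 hst)]
    exact mul_le_mul_of_nonneg_left (by linarith) ((abs_nonneg _).trans (hcK 0))
  linarith [abs_add_le (∫ u in s..t, b u) (∫ u in s..t, c u)]

section

variable {Ω : Type*} {m m' m0 : MeasurableSpace Ω} {μ : Measure Ω}

theorem stronglyMeasurable_intervalIntegral_of_continuous {F : ℝ → Ω → ℝ}
    (hcont : ∀ ω, Continuous fun u => F u ω) (hmeas : ∀ u, StronglyMeasurable (F u)) (a b : ℝ) :
    StronglyMeasurable fun ω => ∫ u in a..b, F u ω := by
  have hF := (stronglyMeasurable_uncurry_of_continuous_of_stronglyMeasurable hcont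
    hmeas).comp_measurable measurable_swap
  exact (hF.integral_prod_right' (ν := volume.restrict (Set.Ioc a b))).sub
    (hF.integral_prod_right' (ν := volume.restrict (Set.Ioc b a)))

theorem integral_abs_sub_le_add {f g h : Ω → ℝ} (hf : Integrable f μ) (hg : Integrable g μ)
    (hh : Integrable h μ) :
    ∫ ω, |f ω - h ω| ∂μ ≤ ∫ ω, |f ω - g ω| ∂μ + ∫ ω, |g ω - h ω| ∂μ := by
  calc ∫ ω, |f ω - h ω| ∂μ ≤ ∫ ω, (|f ω - g ω| + |g ω - h ω|) ∂μ :=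
        integral_mono (hf.sub hh).abs ((hf.sub hg).abs.add (hg.sub hh).abs)
          fun ω => abs_sub_le _ _ _
    _ = ∫ ω, |f ω - g ω| ∂μ + ∫ ω, |g ω - h ω| ∂μ := integral_add (hf.sub hg).abs (hg.sub hh).abs

theorem integral_abs_condExp_sub_condExp_le {f g : Ω → ℝ} (hf : Integrable f μ)
    (hg : Integrable g μ) :
    ∫ ω, |μ[f|m] ω - μ[g|m] ω| ∂μ ≤ ∫ ω, |f ω - g ω| ∂μ := by
  calc ∫ ω, |μ[f|m] ω - μ[g|m] ω| ∂μ = ∫ ω, |μ[f - g|m] ω| ∂μ :=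
        integral_congr_ae <| (condExp_sub hf hg m).mono fun ω h => by simp only [h, Pi.sub_apply]
    _ ≤ ∫ ω, |f ω - g ω| ∂μ := integral_abs_condExp_le (f - g)

theorem integral_abs_condExp_sub_le_two_mul_of_le [IsFiniteMeasure μ] (hm' : m' ≤ m)
    (hm : m ≤ m0) {f : Ω → ℝ} (hf : Integrable f μ) :
    ∫ ω, |μ[f|m] ω - f ω| ∂μ ≤ 2 * ∫ ω, |μ[f|m'] ω - f ω| ∂μ := by
  set g := μ[f|m']
  have hg : Integrable g μ := integrable_condExp
  have hgm : μ[g|m] = g :=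
    condExp_of_stronglyMeasurable hm (stronglyMeasurable_condExp.mono hm') hg
  calc ∫ ω, |μ[f|m] ω - f ω| ∂μ
      ≤ ∫ ω, |μ[f|m] ω - μ[g|m] ω| ∂μ + ∫ ω, |μ[g|m] ω - f ω| ∂μ :=
        integral_abs_sub_le_add integrable_condExp integrable_condExp hf
    _ ≤ ∫ ω, |f ω - g ω| ∂μ + ∫ ω, |g ω - f ω| ∂μ :=
        add_le_add (integral_abs_condExp_sub_condExp_le hf hg) (by rw [hgm])
    _ = 2 * ∫ ω, |g ω - f ω| ∂μ := by simp_rw [abs_sub_comm (f _)]; ring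

theorem integral_abs_eq_toReal_eLpNorm_one {f : Ω → ℝ} (hf : AEStronglyMeasurable f μ) :
    ∫ ω, |f ω| ∂μ = (eLpNorm f 1 μ).toReal := by
  rw [eLpNorm_one_eq_lintegral_enorm, ← integral_norm_eq_lintegral_enorm hf]
  rfl

theorem integral_abs_sub_eq_zero_of_not_integrable {f g : Ω → ℝ} (hf : Integrable f μ)
    (hgm : AEStronglyMeasurable g μ) (hg : ¬Integrable g μ) :
    ∫ ω, |f ω - g ω| ∂μ = 0 := by
  refine integral_undef fun h => hg ?_
  have hfg : Integrable (fun ω => f ω - g ω) μ :=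
    (integrable_norm_iff (hf.aestronglyMeasurable.sub hgm)).1 h
  exact (hf.sub hfg).congr (ae_of_all _ fun ω => sub_sub_cancel (f ω) (g ω))

theorem condExp_div_const (f : Ω → ℝ) (c : ℝ) :
    μ[fun ω => f ω / c|m] =ᵐ[μ] fun ω => μ[f|m] ω / c := by
  simp_rw [div_eq_inv_mul]
  exact condExp_smul c⁻¹ f m

theorem MeasureTheory.Integrable.tendsto_integral_abs_condExp_sub_nhdsLT [IsFiniteMeasure μ]
    (ℱ : Filtration ℝ m0) {t₀ : ℝ} (hleft : ⨆ s : {s : ℝ // s < t₀}, ℱ s = ℱ t₀)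
    {f : Ω → ℝ} (hf : Integrable f μ) (hfm : StronglyMeasurable[ℱ t₀] f) :
    Tendsto (fun t => ∫ ω, |μ[f|ℱ t] ω - f ω| ∂μ) (𝓝[<] t₀) (𝓝 0) := by
  -- Passing to a finer σ-algebra at most doubles the `L¹` error, so it suffices to run the
  -- ℕ-indexed martingale convergence theorem along `t₀ - 1 / (n + 1)`.
  set s : ℕ → ℝ := fun n => t₀ - 1 / (n + 1)
  have hs_lt : ∀ n, s n < t₀ := fun n => sub_lt_self _ Nat.one_div_pos_of_nat
  have hs_mono : Monotone s := fun i j hij => sub_le_sub_left (Nat.one_div_le_one_div hij) _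
  let 𝒢 : Filtration ℕ m0 :=
    ⟨fun n => ℱ (s n), fun _ _ hij => ℱ.mono (hs_mono hij), fun n => ℱ.le _⟩
  have h𝒢 : ⨆ n, 𝒢 n = ℱ t₀ := by
    refine le_antisymm (iSup_le fun n => ℱ.mono (hs_lt n).le) (hleft ▸ iSup_le fun r => ?_)
    obtain ⟨n, hn⟩ := exists_nat_one_div_lt (sub_pos.2 r.2)
    exact (ℱ.mono (by simp only [s]; linarith)).trans (le_iSup (fun n => 𝒢 n) n)
  have h𝒢lim : Tendsto (fun n => ∫ ω, |μ[f|𝒢 n] ω - f ω| ∂μ) atTop (𝓝 0) := by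
    have := (ENNReal.tendsto_toReal ENNReal.zero_ne_top).comp
      (hf.tendsto_eLpNorm_condExp (ℱ := 𝒢) (h𝒢 ▸ hfm))
    refine this.congr fun n => ?_
    exact (integral_abs_eq_toReal_eLpNorm_one
      (integrable_condExp.sub hf).aestronglyMeasurable).symm
  refine tendsto_order.2 ⟨fun a ha => Eventually.of_forall fun t =>
    ha.trans_le (integral_nonneg fun ω => abs_nonneg _), fun ε hε => ?_⟩
  obtain ⟨N, hN⟩ := (h𝒢lim.eventually (gt_mem_nhds (half_pos hε))).exists
  filter_upwards [Ico_mem_nhdsLT (hs_lt N)] with t ht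
  calc ∫ ω, |μ[f|ℱ t] ω - f ω| ∂μ ≤ 2 * ∫ ω, |μ[f|𝒢 N] ω - f ω| ∂μ :=
        integral_abs_condExp_sub_le_two_mul_of_le (ℱ.mono ht.1) (ℱ.le t) hf
    _ < ε := by linarith

theorem tendsto_integral_abs_condExp_sub {ι : Type*} {l : Filter ι} {𝒢 : ι → MeasurableSpace Ω}
    {X : ι → Ω → ℝ} {Y : Ω → ℝ} (hX : ∀ᶠ i in l, Integrable (X i) μ) (hY : Integrable Y μ)
    (hXY : Tendsto (fun i => ∫ ω, |X i ω - Y ω| ∂μ) l (𝓝 0))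
    (hYcond : Tendsto (fun i => ∫ ω, |μ[Y|𝒢 i] ω - Y ω| ∂μ) l (𝓝 0)) :
    Tendsto (fun i => ∫ ω, |μ[X i|𝒢 i] ω - Y ω| ∂μ) l (𝓝 0) := by
  refine squeeze_zero' (Eventually.of_forall fun i => integral_nonneg fun ω => abs_nonneg _) ?_
    (by simpa using hXY.add hYcond)
  filter_upwards [hX] with i hXi
  calc ∫ ω, |μ[X i|𝒢 i] ω - Y ω| ∂μ
      ≤ ∫ ω, |μ[X i|𝒢 i] ω - μ[Y|𝒢 i] ω| ∂μ + ∫ ω, |μ[Y|𝒢 i] ω - Y ω| ∂μ :=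
        integral_abs_sub_le_add integrable_condExp integrable_condExp hY
    _ ≤ ∫ ω, |X i ω - Y ω| ∂μ + ∫ ω, |μ[Y|𝒢 i] ω - Y ω| ∂μ :=
        add_le_add_left (integral_abs_condExp_sub_condExp_le hXi hY) _

theorem tendsto_integral_abs_sub_of_tendsto_integral {ι : Type*} {l : Filter ι}
    [l.IsCountablyGenerated] {X : ι → Ω → ℝ} {Y g : Ω → ℝ}
    (hX : ∀ᶠ i in l, Integrable (X i) μ) (hY : Integrable Y μ) (hg : Integrable g μ)
    (hgX : ∀ᶠ i in l, ∀ᵐ ω ∂μ, g ω ≤ X i ω)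
    (hlim : ∀ᵐ ω ∂μ, Tendsto (fun i => X i ω) l (𝓝 (Y ω)))
    (hint : Tendsto (fun i => ∫ ω, X i ω ∂μ) l (𝓝 (∫ ω, Y ω ∂μ))) :
    Tendsto (fun i => ∫ ω, |X i ω - Y ω| ∂μ) l (𝓝 0) := by
  have hneg : Tendsto (fun i => ∫ ω, (X i ω - Y ω)⁻ ∂μ) l (𝓝 0) := by
    have hdom := tendsto_integral_filter_of_dominated_convergence (μ := μ) (l := l)
      (fun ω => (g ω - Y ω)⁻) (F := fun i ω => (X i ω - Y ω)⁻) (f := fun _ => 0)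
      (hX.mono fun i hXi => by fun_prop) ?_ (hg.sub hY).neg_part ?_
    · simpa using hdom
    · filter_upwards [hgX] with i hi
      filter_upwards [hi] with ω hω
      rw [Real.norm_of_nonneg (negPart_nonneg _)]
      exact negPart_anti (sub_le_sub_right hω _)
    · filter_upwards [hlim] with ω hω
      simpa [Function.comp_def] using (continuous_negPart.tendsto _).comp (hω.sub_const (Y ω))
  have hmean : Tendsto (fun i => ∫ ω, (X i ω - Y ω) ∂μ) l (𝓝 0) := by
    refine (tendsto_sub_nhds_zero_iff.2 hint).congr' ?_
    filter_upwards [hX] with i hXi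
    exact (integral_sub hXi hY).symm
  have hsplit : ∀ᶠ i in l, 2 * ∫ ω, (X i ω - Y ω)⁻ ∂μ + ∫ ω, (X i ω - Y ω) ∂μ
      = ∫ ω, |X i ω - Y ω| ∂μ := by
    filter_upwards [hX] with i hXi
    exact (integral_abs_eq_two_mul_integral_negPart_add_integral (hXi.sub hY)).symm
  simpa using ((hneg.const_mul 2).add hmean).congr' hsplit

theorem tendsto_integral_abs_condExp_intervalIntegral_div_sub [IsFiniteMeasure μ]
    (ℱ : Filtration ℝ m0) {t₀ c : ℝ} (hleft : ⨆ s : {s : ℝ // s < t₀}, ℱ s = ℱ t₀)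
    {D : ℝ → Ω → ℝ} (hDad : Adapted ℱ D) (hDcont : ∀ ω, Continuous fun u => D u ω)
    (hDlb : ∀ u ω, c ≤ D u ω)
    (hI : ∀ᶠ t in 𝓝[<] t₀, Integrable (fun ω => ∫ u in t..t₀, D u ω) μ)
    (hD₀ : Integrable (D t₀) μ)
    (hLeb : Tendsto (fun t => (∫ ω, (∫ u in t..t₀, D u ω) ∂μ) / (t₀ - t)) (𝓝[<] t₀)
      (𝓝 (∫ ω, D t₀ ω ∂μ))) :
    Tendsto (fun t => ∫ ω, |μ[fun ω' => ∫ u in t..t₀, D u ω'|ℱ t] ω / (t₀ - t) - D t₀ ω| ∂μ)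
      (𝓝[<] t₀) (𝓝 0) := by
  set X : ℝ → Ω → ℝ := fun t ω => (∫ u in t..t₀, D u ω) / (t₀ - t)
  have hX : ∀ᶠ t in 𝓝[<] t₀, Integrable (X t) μ := hI.mono fun t ht => ht.div_const _
  have hXD : Tendsto (fun t => ∫ ω, |X t ω - D t₀ ω| ∂μ) (𝓝[<] t₀) (𝓝 0) := by
    refine tendsto_integral_abs_sub_of_tendsto_integral hX hD₀ (integrable_const c) ?_
      (ae_of_all _ fun ω => tendsto_intervalIntegral_div_sub_nhdsLT (hDcont ω) t₀)
      (hLeb.congr fun t => (integral_div _ _).symm)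
    filter_upwards [self_mem_nhdsWithin] with t (ht : t < t₀)
    exact ae_of_all _ fun ω =>
      le_intervalIntegral_div_sub ((hDcont ω).intervalIntegrable _ _) ht fun u _ => hDlb u ω
  refine (tendsto_integral_abs_condExp_sub hX hD₀ hXD
    (hD₀.tendsto_integral_abs_condExp_sub_nhdsLT ℱ hleft (hDad t₀).stronglyMeasurable)).congr
    fun t => integral_congr_ae ?_
  filter_upwards [condExp_div_const (μ := μ) (m := ℱ t) (fun ω => ∫ u in t..t₀, D u ω)
    (t₀ - t)] with ω hω
  rw [hω]

end

theorem stmt12_general {Ω : Type*} {m0 : MeasurableSpace Ω} (μ : Measure Ω)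
    [IsProbabilityMeasure μ] (ℱ : Filtration ℝ m0)
    (hleft : ∀ t : ℝ, (⨆ s : {s : ℝ // s < t}, (ℱ s : MeasurableSpace Ω)) = ℱ t)
    (T : ℝ)
    (B C : ℝ → Ω → ℝ)
    (hBad : Adapted ℱ B) (hCad : Adapted ℱ C)
    (hBcont : ∀ ω, Continuous fun t => B t ω) (hCcont : ∀ ω, Continuous fun t => C t ω)
    (hBpos : ∀ t ω, 0 ≤ B t ω)
    (hBint : Integrable (fun ω => ∫ u in (0:ℝ)..T, B u ω) μ)
    (hCbd : ∃ K : ℝ, ∀ t ω, |C t ω| ≤ K)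
    (A : ℝ → Ω → ℝ) (hA : ∀ t ω, A t ω = ∫ u in (0:ℝ)..t, (B u ω + C u ω))
    (t₀ : ℝ) (ht₀ : t₀ ∈ Set.Ioc 0 T)
    (hLeb : Tendsto (fun t => (∫ ω, (A t₀ ω - A t ω) ∂μ) / (t₀ - t)) (𝓝[<] t₀)
      (𝓝 (∫ ω, (B t₀ ω + C t₀ ω) ∂μ))) :
    Tendsto
      (fun t => ∫ ω, |(μ[fun ω' => A t₀ ω' - A t ω' | ℱ t]) ω / (t₀ - t) -
        (B t₀ ω + C t₀ ω)| ∂μ)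
      (𝓝[<] t₀) (𝓝 0) := by
  obtain ⟨ht₀_pos, ht₀T⟩ := ht₀
  obtain ⟨K, hK⟩ := hCbd
  have hD : ∀ ω, Continuous fun u => B u ω + C u ω := fun ω => (hBcont ω).add (hCcont ω)
  have hAsub : ∀ t ω, A t₀ ω - A t ω = ∫ u in t..t₀, (B u ω + C u ω) := fun t ω => by
    rw [hA, hA]
    exact intervalIntegral.integral_interval_sub_left ((hD ω).intervalIntegrable _ _)
      ((hD ω).intervalIntegrable _ _)
  simp_rw [hAsub] at hLeb ⊢
  have hDad : Adapted ℱ fun u ω => B u ω + C u ω := fun u => (hBad u).add (hCad u)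
  by_cases hD₀ : Integrable (fun ω => B t₀ ω + C t₀ ω) μ
  · refine tendsto_integral_abs_condExp_intervalIntegral_div_sub (c := -K) ℱ (hleft t₀) hDad hD
      (fun u ω => by linarith [hBpos u ω, (abs_le.1 (hK u ω)).1]) ?_ hD₀ hLeb
    filter_upwards [Ioo_mem_nhdsLT ht₀_pos] with t ht
    refine (hBint.add (integrable_const (K * T))).mono'
      (stronglyMeasurable_intervalIntegral_of_continuous hD
        (fun u => ((hDad u).mono (ℱ.le u) le_rfl).stronglyMeasurable) t t₀).aestronglyMeasurable
      (ae_of_all _ fun ω => ?_)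
    exact abs_intervalIntegral_add_le (hBcont ω) (hCcont ω) (hBpos · ω) (hK · ω) ht.1.le ht.2.le
      ht₀T
  -- otherwise every integral in the statement is the junk value `0`
  · exact tendsto_const_nhds.congr fun t => (integral_abs_sub_eq_zero_of_not_integrable
      (integrable_condExp.div_const _) ((hDad t₀).mono (ℱ.le t₀) le_rfl).aestronglyMeasurable
      hD₀).symm

/-- Lebesgue differentiation for conditional expectations: if
`A(t) = ∫₀ᵗ (B(u) + C(u)) du` with `B ≥ 0` continuous adapted and time-integrable
in expectation, `C` continuous adapted and uniformly bounded, the filtration is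
left-continuous, and `t₀` is a Lebesgue point in the sense that
`E[A(t₀) − A(t)]/(t₀ − t) → E[B(t₀) + C(t₀)]` as `t ↑ t₀`, then also
`E[A(t₀) − A(t) | F(t)]/(t₀ − t) → B(t₀) + C(t₀)` in `L¹(ℙ)`. -/
theorem stmt12 {Ω : Type*} {m0 : MeasurableSpace Ω} (μ : Measure Ω)
    [IsProbabilityMeasure μ] (ℱ : Filtration ℝ m0)
    (hleft : ∀ t : ℝ, (⨆ s : {s : ℝ // s < t}, (ℱ s : MeasurableSpace Ω)) = ℱ t)
    (T : ℝ) (hT : 0 < T)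
    (B C : ℝ → Ω → ℝ)
    (hBad : Adapted ℱ B) (hCad : Adapted ℱ C)
    (hBcont : ∀ ω, Continuous fun t => B t ω) (hCcont : ∀ ω, Continuous fun t => C t ω)
    (hBpos : ∀ t ω, 0 ≤ B t ω)
    (hBint : Integrable (fun ω => ∫ u in (0:ℝ)..T, B u ω) μ)
    (hCbd : ∃ K : ℝ, ∀ t ω, |C t ω| ≤ K)
    (A : ℝ → Ω → ℝ) (hA : ∀ t ω, A t ω = ∫ u in (0:ℝ)..t, (B u ω + C u ω))
    (t₀ : ℝ) (ht₀ : t₀ ∈ Set.Ioc 0 T)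
    (hLeb : Tendsto (fun t => (∫ ω, (A t₀ ω - A t ω) ∂μ) / (t₀ - t)) (𝓝[<] t₀)
      (𝓝 (∫ ω, (B t₀ ω + C t₀ ω) ∂μ))) :
    Tendsto
      (fun t => ∫ ω, |(μ[fun ω' => A t₀ ω' - A t ω' | ℱ t]) ω / (t₀ - t) -
        (B t₀ ω + C t₀ ω)| ∂μ)
      (𝓝[<] t₀) (𝓝 0) :=
  stmt12_general μ ℱ hleft T B C hBad hCad hBcont hCcont hBpos hBint hCbd A hA t₀ ht₀ hLeb
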